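/- Let π₂ be a policy minimizing Ψ_α^2 over all policies, let λ ≥ 2 be real, and suppose there exists a policy q and a constant 𝓘 ≥ 0 with Ψ_α^λ(q) ≤ 𝓘. Then reg(π₂) − α ≤ 2^{1−2/λ} · (𝓘 · info(π₂))^{1/λ}. -/

import Mathlib

/-!
Mix the minimiser `π₂` with `q`: along `π_t = (1 - t) π₂ + t q` the information is affine and
the excess `x_t = (reg π_t - α)₊` is convex in `t`, so minimality of `x_t ^ 2 / info π_t` at
`t = 0` yields the first-order condition `x ^ 2 v ≤ u (2 x y - x ^ 2)`, where `x, y` are the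
excesses and `u, v` the informations of `π₂` and `q`. With `y ^ λ ≤ 𝓘 v` and the elementary
bound `x ^ (λ - 1) (2 y - x) ≤ 2 ^ (λ - 2) y ^ λ` this gives `x ^ λ ≤ 2 ^ (λ - 2) 𝓘 u`.
-/

/-- A policy assigns to each context `s` a probability vector over the actions `A`. -/
structure Policy (S A : Type) [Fintype S] [Fintype A] where
  prob : S → A → ℝ
  nonneg : ∀ s a, 0 ≤ prob s a
  sum_eq_one : ∀ s, ∑ a, prob s a = 1

/-- Expected one-step regret of a policy under context distribution `p`. -/
noncomputable def reg {S A : Type} [Fintype S] [Fintype A]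
    (p : S → ℝ) (Δ : S → A → ℝ) (π : Policy S A) : ℝ :=
  ∑ s, p s * ∑ a, Δ s a * π.prob s a

/-- Expected information gain of a policy under context distribution `p`. -/
noncomputable def info {S A : Type} [Fintype S] [Fintype A]
    (p : S → ℝ) (I : S → A → ℝ) (π : Policy S A) : ℝ :=
  ∑ s, p s * ∑ a, I s a * π.prob s a

/-- The `(α, λ)`-marginal information ratio `Ψ_α^λ(π)`. -/
noncomputable def ratio {S A : Type} [Fintype S] [Fintype A]
    (p : S → ℝ) (Δ I : S → A → ℝ) (α lam : ℝ) (π : Policy S A) : ℝ :=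
  (max 0 (reg p Δ π - α)) ^ lam / info p I π

open Filter Set Topology

noncomputable def excess {S A : Type} [Fintype S] [Fintype A]
    (p : S → ℝ) (Δ : S → A → ℝ) (α : ℝ) (π : Policy S A) : ℝ :=
  max 0 (reg p Δ π - α)

lemma le_of_forall_le_add_mul {a b c : ℝ} (h : ∀ t ∈ Ioo (0 : ℝ) 1, a ≤ b + t * c) : a ≤ b := by
  have hlim : Tendsto (fun t : ℝ => b + t * c) (𝓝[>] 0) (𝓝 b) := by
    have : Tendsto (fun t : ℝ => b + t * c) (𝓝 0) (𝓝 (b + 0 * c)) :=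
      tendsto_const_nhds.add (tendsto_id.mul_const c)
    simpa using this.mono_left nhdsWithin_le_nhds
  exact ge_of_tendsto hlim (eventually_of_mem (Ioo_mem_nhdsGT one_pos) h)

lemma two_mul_sub_one_le_two_rpow_mul_rpow {c lam : ℝ} (hc : 0 ≤ c) (hlam : 2 ≤ lam) :
    2 * c - 1 ≤ 2 ^ (lam - 2) * c ^ lam := by
  have hrw : (2 : ℝ) ^ (lam - 2) * c ^ lam = (2 * c) ^ lam / 4 := by
    rw [Real.mul_rpow zero_le_two hc, Real.rpow_sub two_pos, Real.rpow_two]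
    ring
  rw [hrw]
  rcases le_or_gt (2 * c) 1 with hw | hw
  · have : 0 ≤ (2 * c) ^ lam := by positivity
    linarith
  · -- `w - 1 ≤ w ^ 2 / 4` is `(w - 2) ^ 2 ≥ 0`, and `w ^ 2 ≤ w ^ λ` as `w ≥ 1`
    have hsq : (2 * c) ^ (2 : ℝ) ≤ (2 * c) ^ lam := Real.rpow_le_rpow_of_exponent_le hw.le hlam
    rw [Real.rpow_two] at hsq
    nlinarith [sq_nonneg (2 * c - 2)]

lemma rpow_mul_two_mul_sub_le {x y lam : ℝ} (hx : 0 < x) (hy : 0 ≤ y) (hlam : 2 ≤ lam) :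
    x ^ lam * (2 * x * y - x ^ 2) ≤ 2 ^ (lam - 2) * y ^ lam * x ^ 2 := by
  obtain ⟨c, hc, rfl⟩ : ∃ c, 0 ≤ c ∧ y = c * x := ⟨y / x, by positivity, by field_simp⟩
  have h := mul_le_mul_of_nonneg_right (two_mul_sub_one_le_two_rpow_mul_rpow hc hlam)
    (by positivity : 0 ≤ x ^ lam * x ^ 2)
  rw [Real.mul_rpow hc hx.le]
  linear_combination h

lemma rpow_le_of_sq_mul_le {x y u v Ibd lam : ℝ} (hx : 0 ≤ x) (hy : 0 ≤ y) (hu : 0 < u)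
    (hv : 0 ≤ v) (hIbd : 0 ≤ Ibd) (hlam : 2 ≤ lam)
    (hfoc : x ^ 2 * v ≤ u * (2 * x * y - x ^ 2)) (hy_le : y ^ lam ≤ Ibd * v) :
    x ^ lam ≤ 2 ^ (lam - 2) * (Ibd * u) := by
  rcases hx.eq_or_lt with rfl | hx
  · rw [Real.zero_rpow (by linarith)]
    positivity
  have hy : 0 < y := by
    by_contra! hy0
    obtain rfl : y = 0 := le_antisymm hy0 hy
    nlinarith [mul_pos hu (pow_pos hx 2), mul_nonneg (sq_nonneg x) hv]
  have hyx : x ^ 2 * y ^ lam ≤ Ibd * u * (2 * x * y - x ^ 2) :=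
    calc x ^ 2 * y ^ lam ≤ x ^ 2 * (Ibd * v) := by gcongr
      _ = Ibd * (x ^ 2 * v) := by ring
      _ ≤ Ibd * (u * (2 * x * y - x ^ 2)) := by gcongr
      _ = Ibd * u * (2 * x * y - x ^ 2) := by ring
  have hpos : 0 < x ^ 2 * y ^ lam := by positivity
  refine le_of_mul_le_mul_right ?_ hpos
  calc x ^ lam * (x ^ 2 * y ^ lam) ≤ x ^ lam * (Ibd * u * (2 * x * y - x ^ 2)) := by
        gcongr
    _ = Ibd * u * (x ^ lam * (2 * x * y - x ^ 2)) := by ring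
    _ ≤ Ibd * u * (2 ^ (lam - 2) * y ^ lam * x ^ 2) :=
        mul_le_mul_of_nonneg_left (rpow_mul_two_mul_sub_le hx hy.le hlam) (by positivity)
    _ = 2 ^ (lam - 2) * (Ibd * u) * (x ^ 2 * y ^ lam) := by ring

lemma le_two_rpow_mul_rpow_of_rpow_le {x M lam : ℝ} (hx : 0 ≤ x) (hM : 0 ≤ M) (hlam : 0 < lam)
    (h : x ^ lam ≤ 2 ^ (lam - 2) * M) :
    x ≤ 2 ^ (1 - 2 / lam) * M ^ (1 / lam) := by
  have hroot : (2 ^ (lam - 2) * M) ^ lam⁻¹ = 2 ^ (1 - 2 / lam) * M ^ (1 / lam) := by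
    rw [Real.mul_rpow (by positivity) hM, ← Real.rpow_mul zero_le_two, one_div]
    congr 2
    field_simp
  rw [← hroot, Real.le_rpow_inv_iff_of_pos hx (by positivity) hlam]
  exact h

namespace Policy

variable {S A : Type} [Fintype S] [Fintype A]

noncomputable def mix (t : ℝ) (ht : t ∈ Icc (0 : ℝ) 1) (π q : Policy S A) : Policy S A where
  prob s a := (1 - t) * π.prob s a + t * q.prob s a
  nonneg s a := add_nonneg (mul_nonneg (sub_nonneg.2 ht.2) (π.nonneg s a))
    (mul_nonneg ht.1 (q.nonneg s a))
  sum_eq_one s := by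
    rw [Finset.sum_add_distrib, ← Finset.mul_sum, ← Finset.mul_sum, π.sum_eq_one, q.sum_eq_one]
    ring

lemma sum_mul_sum_mix (p : S → ℝ) (f : S → A → ℝ) {t : ℝ} (ht : t ∈ Icc (0 : ℝ) 1)
    (π q : Policy S A) :
    ∑ s, p s * ∑ a, f s a * (mix t ht π q).prob s a =
      (1 - t) * ∑ s, p s * ∑ a, f s a * π.prob s a + t * ∑ s, p s * ∑ a, f s a * q.prob s a := by
  simp only [mix, mul_add, Finset.sum_add_distrib, Finset.mul_sum]
  congr 1 <;> exact Finset.sum_congr rfl fun s _ => Finset.sum_congr rfl fun a _ => by ring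

lemma exists_prob_pos (π : Policy S A) (s : S) : ∃ a, 0 < π.prob s a := by
  have : ∑ _a : A, (0 : ℝ) < ∑ a, π.prob s a := by simp [π.sum_eq_one]
  obtain ⟨a, -, ha⟩ := Finset.exists_lt_of_sum_lt this
  exact ⟨a, ha⟩

end Policy

section

variable {S A : Type} [Fintype S] [Fintype A]

lemma info_pos {p : S → ℝ} (hp0 : ∀ s, 0 ≤ p s) (hpex : ∃ s, 0 < p s) {I : S → A → ℝ}
    (hI : ∀ s a, 0 < I s a) (π : Policy S A) : 0 < info p I π := by
  have hinner : ∀ s, 0 < ∑ a, I s a * π.prob s a := fun s =>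
    have ⟨a, ha⟩ := π.exists_prob_pos s
    Finset.sum_pos' (fun a _ => mul_nonneg (hI s a).le (π.nonneg s a))
      ⟨a, Finset.mem_univ a, mul_pos (hI s a) ha⟩
  obtain ⟨s, hs⟩ := hpex
  exact Finset.sum_pos' (fun s _ => mul_nonneg (hp0 s) (hinner s).le)
    ⟨s, Finset.mem_univ s, mul_pos hs (hinner s)⟩

lemma excess_mix_le (p : S → ℝ) (Δ : S → A → ℝ) (α : ℝ) {t : ℝ} (ht : t ∈ Icc (0 : ℝ) 1)
    (π q : Policy S A) :
    excess p Δ α (Policy.mix t ht π q) ≤ (1 - t) * excess p Δ α π + t * excess p Δ α q := by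
  have h0 : 0 ≤ 1 - t := sub_nonneg.2 ht.2
  have ht0 : 0 ≤ t := ht.1
  have hreg : reg p Δ (Policy.mix t ht π q) = (1 - t) * reg p Δ π + t * reg p Δ q :=
    Policy.sum_mul_sum_mix p Δ ht π q
  refine max_le (by unfold excess; positivity) ?_
  calc reg p Δ (Policy.mix t ht π q) - α
        = (1 - t) * (reg p Δ π - α) + t * (reg p Δ q - α) := by
          rw [hreg]; ring
    _ ≤ (1 - t) * excess p Δ α π + t * excess p Δ α q := by
          unfold excess
          gcongr <;> exact le_max_right _ _

/-- First-order optimality of a minimiser of `Ψ_α^2` in the direction of `q`. -/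
lemma excess_sq_mul_info_le {p : S → ℝ} (hp0 : ∀ s, 0 ≤ p s) (hpex : ∃ s, 0 < p s)
    (Δ : S → A → ℝ) {I : S → A → ℝ} (hI : ∀ s a, 0 < I s a) (α : ℝ) {π : Policy S A}
    (hmin : ∀ π' : Policy S A, ratio p Δ I α 2 π ≤ ratio p Δ I α 2 π') (q : Policy S A) :
    excess p Δ α π ^ 2 * info p I q ≤
      info p I π * (2 * excess p Δ α π * excess p Δ α q - excess p Δ α π ^ 2) := by
  set x := excess p Δ α π
  set y := excess p Δ α q
  set u := info p I π
  set v := info p I q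
  have hu : 0 < u := info_pos hp0 hpex hI π
  refine le_of_forall_le_add_mul (c := u * (y - x) ^ 2) fun t ht => ?_
  have ht' : t ∈ Icc (0 : ℝ) 1 := Ioo_subset_Icc_self ht
  set π' := Policy.mix t ht' π q
  have hinfo : info p I π' = (1 - t) * u + t * v := Policy.sum_mul_sum_mix p I ht' π q
  have hm : x ^ 2 / u ≤ excess p Δ α π' ^ 2 / ((1 - t) * u + t * v) := by
    have h := hmin π'
    simp only [ratio, Real.rpow_two, hinfo] at h
    exact h
  have hmix : x ^ 2 * ((1 - t) * u + t * v) ≤ ((1 - t) * x + t * y) ^ 2 * u := by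
    rw [div_le_div_iff₀ hu (hinfo ▸ info_pos hp0 hpex hI π')] at hm
    refine hm.trans (mul_le_mul_of_nonneg_right ?_ hu.le)
    exact pow_le_pow_left₀ (le_max_left _ _) (excess_mix_le p Δ α ht' π q) 2
  have : t * (x ^ 2 * v) ≤ t * (u * (2 * x * y - x ^ 2) + t * (u * (y - x) ^ 2)) := by
    linear_combination hmix
  exact le_of_mul_le_mul_left this ht.1

end

theorem stmt_3_general {S A : Type} [Fintype S] [Fintype A]
    (p : S → ℝ) (hp0 : ∀ s, 0 ≤ p s) (hpex : ∃ s, 0 < p s)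
    (Δ I : S → A → ℝ) (hI : ∀ s a, 0 < I s a)
    (α lam Ibd : ℝ) (hlam : 2 ≤ lam) (hIbd : 0 ≤ Ibd)
    (π₂ : Policy S A)
    (hmin : ∀ q : Policy S A, ratio p Δ I α 2 π₂ ≤ ratio p Δ I α 2 q)
    (q : Policy S A) (hq : ratio p Δ I α lam q ≤ Ibd) :
    reg p Δ π₂ - α ≤ 2 ^ (1 - 2 / lam) * (Ibd * info p I π₂) ^ (1 / lam) := by
  have hu := info_pos hp0 hpex hI π₂
  have hv := info_pos hp0 hpex hI q
  have hfoc := excess_sq_mul_info_le hp0 hpex Δ hI α hmin q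
  have hq' : excess p Δ α q ^ lam ≤ Ibd * info p I q := (div_le_iff₀ hv).mp hq
  have hx : 0 ≤ excess p Δ α π₂ := le_max_left _ _
  calc reg p Δ π₂ - α ≤ excess p Δ α π₂ := le_max_right _ _
    _ ≤ 2 ^ (1 - 2 / lam) * (Ibd * info p I π₂) ^ (1 / lam) :=
      le_two_rpow_mul_rpow_of_rpow_le hx (by positivity) (by linarith) <|
        rpow_le_of_sq_mul_le hx (le_max_left _ _) hu hv.le hIbd hlam hfoc hq'

/-- Per-round regret–information tradeoff (Eq. (7) in the proof of Theorem 3.1): if `π₂`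
minimizes `Ψ_α^2` and some policy `q` satisfies `Ψ_α^λ(q) ≤ 𝓘` with `𝓘 ≥ 0` and `λ ≥ 2`,
then `reg(π₂) − α ≤ 2^(1−2/λ) · (𝓘 · info(π₂))^(1/λ)`. -/
theorem stmt_3 {S A : Type} [Fintype S] [Fintype A] [Nonempty S] [Nonempty A]
    (p : S → ℝ) (hp0 : ∀ s, 0 ≤ p s) (hp1 : ∑ s, p s = 1) (hpex : ∃ s, 0 < p s)
    (Δ I : S → A → ℝ) (hΔ : ∀ s a, 0 ≤ Δ s a) (hI : ∀ s a, 0 < I s a)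
    (α lam Ibd : ℝ) (hα : 0 ≤ α) (hlam : 2 ≤ lam) (hIbd : 0 ≤ Ibd)
    (π₂ : Policy S A)
    (hmin : ∀ q : Policy S A, ratio p Δ I α 2 π₂ ≤ ratio p Δ I α 2 q)
    (q : Policy S A) (hq : ratio p Δ I α lam q ≤ Ibd) :
    reg p Δ π₂ - α ≤ 2 ^ (1 - 2 / lam) * (Ibd * info p I π₂) ^ (1 / lam) :=
  stmt_3_general p hp0 hpex Δ I hI α lam Ibd hlam hIbd π₂ hmin q hq
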